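/- (i) The assignment F_j ↦ 𝒢(j)(v_j^{−1}−v_j)^{−1}·𝒮_j, K_i'^{±1} ↦ 𝒦'_{±i}, J_i'^{±1} ↦ 𝒥'_{±i} extends to an 𝔽-algebra anti-homomorphism ρ⁻: ̂'𝔣⁻ → End_𝔽( ̂'𝔣⁺). (ii) For every y∈'𝔣⁻ and all x',x''∈'𝔣⁺, one has ρ⁻(y)(x'x'') = Σ ρ⁻(y₂)(x')·ρ⁻(y₁)(x''), where Δ₋(y)=Σ y₁⊗y₂. -/

import Mathlib

open scoped TensorProduct

noncomputable section

/-- A Cartan datum on `I`. -/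
structure CartanDatum (I : Type) where
  c : I → I → ℤ
  symm : ∀ i j, c i j = c j i
  pos : ∀ i, 0 < c i i
  even : ∀ i, Even (c i i)
  dvd : ∀ i j, i ≠ j → c i i ∣ 2 * c i j
  nonpos : ∀ i j, i ≠ j → 2 * c i j ≤ 0

namespace CartanDatum

variable {I : Type} (cd : CartanDatum I)

/-- `d i = (i·i)/2`. -/
def d (i : I) : ℤ := cd.c i i / 2

/-- `a i j = 2(i·j)/(i·i)`. -/
def a (i j : I) : ℤ := 2 * cd.c i j / cd.c i i

/-- Extension of the pairing to `ℕ[I] × ℕ[I]`. -/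
def dotN (ν μ : I →₀ ℕ) : ℤ :=
  ν.sum fun i m => μ.sum fun j n => (m : ℤ) * (n : ℤ) * cd.c i j

end CartanDatum

/-- A multiplicative bilinear form `ℕ[I] × ℕ[I] → 𝔽`. -/
structure MultForm (I 𝔽 : Type) [Field 𝔽] where
  f : (I →₀ ℕ) → (I →₀ ℕ) → 𝔽
  add_left : ∀ ν ν' μ, f (ν + ν') μ = f ν μ * f ν' μ
  add_right : ∀ μ ν ν', f μ (ν + ν') = f μ ν * f μ ν'
  ne_zero : ∀ ν μ, f ν μ ≠ 0

/-- The trivial multiplicative bilinear form, constantly `1`. -/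
def trivMF (I 𝔽 : Type) [Field 𝔽] : MultForm I 𝔽 :=
  ⟨fun _ _ => 1, fun _ _ _ => by ring, fun _ _ _ => by ring, fun _ _ => one_ne_zero⟩

variable {I : Type}

/-- The generator `i` of `ℕ[I]`. -/
def δN (i : I) : I →₀ ℕ := Finsupp.single i 1

/-- The model for the free algebra `'𝔣` on the `θ i`. -/
abbrev FA (𝔽 I : Type) [Field 𝔽] := MonoidAlgebra 𝔽 (FreeMonoid I)

/-- The generator `θ i` of `'𝔣`. -/
def θ (𝔽 : Type) [Field 𝔽] {I : Type} (i : I) : FA 𝔽 I :=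
  MonoidAlgebra.of 𝔽 (FreeMonoid I) (FreeMonoid.of i)

/-- The `ℕ[I]`-degree of a word. -/
def wt [DecidableEq I] (w : FreeMonoid I) : I →₀ ℕ :=
  Multiset.toFinsupp (↑(FreeMonoid.toList w))

/-- Homogeneity of degree `ν` in `'𝔣`. -/
def IsHomog {𝔽 : Type} [Field 𝔽] [DecidableEq I] (ν : I →₀ ℕ) (x : FA 𝔽 I) : Prop :=
  ∀ w ∈ Finsupp.support (x.coeff : FreeMonoid I →₀ 𝔽), wt w = ν

/-- The model for `'𝔣 ⊗ '𝔣` (basis: pairs of words). -/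
abbrev TA (𝔽 I : Type) [Field 𝔽] := MonoidAlgebra 𝔽 (FreeMonoid I × FreeMonoid I)

/-- The tensor `x ⊗ y` in the model of `'𝔣 ⊗ '𝔣`. -/
def tmul {𝔽 : Type} [Field 𝔽] (x y : FA 𝔽 I) : TA 𝔽 I :=
  Finsupp.sum (x.coeff : FreeMonoid I →₀ 𝔽) fun w a =>
    Finsupp.sum (y.coeff : FreeMonoid I →₀ 𝔽) fun u b =>
      MonoidAlgebra.ofCoeff (Finsupp.single (w, u) (a * b) : (FreeMonoid I × FreeMonoid I) →₀ 𝔽)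

/-- The twisted multiplication on `'𝔣 ⊗ '𝔣`:
`(x₁⊗x₂)(y₁⊗y₂) = v^{-|y₁|·|x₂|} β(|x₂|,|y₁|) x₁y₁ ⊗ x₂y₂`. -/
def tMul [DecidableEq I] {𝔽 : Type} [Field 𝔽] (cd : CartanDatum I) (v : 𝔽)
    (β : MultForm I 𝔽) (z z' : TA 𝔽 I) : TA 𝔽 I :=
  Finsupp.sum (z.coeff : (FreeMonoid I × FreeMonoid I) →₀ 𝔽) fun p a =>
    Finsupp.sum (z'.coeff : (FreeMonoid I × FreeMonoid I) →₀ 𝔽) fun q b =>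
      MonoidAlgebra.ofCoeff (Finsupp.single (p.1 * q.1, p.2 * q.2)
        (a * b * v ^ (-(cd.dotN (wt q.1) (wt p.2))) * β.f (wt p.2) (wt q.1))
        : (FreeMonoid I × FreeMonoid I) →₀ 𝔽)

/-- The bilinear form on `'𝔣 ⊗ '𝔣` induced by a form `B` on `'𝔣`:
`(x₁⊗x₂, y₁⊗y₂) = α(|x₁|,|x₂|) (x₁,y₁) (x₂,y₂)` for homogeneous `x₁, x₂`. -/
def pairT [DecidableEq I] {𝔽 : Type} [Field 𝔽] (α : MultForm I 𝔽)
    (B : FA 𝔽 I →ₗ[𝔽] FA 𝔽 I →ₗ[𝔽] 𝔽) (z z' : TA 𝔽 I) : 𝔽 :=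
  Finsupp.sum (z.coeff : (FreeMonoid I × FreeMonoid I) →₀ 𝔽) fun p a =>
    Finsupp.sum (z'.coeff : (FreeMonoid I × FreeMonoid I) →₀ 𝔽) fun q b =>
      a * b * α.f (wt p.1) (wt p.2)
        * B (MonoidAlgebra.single p.1 1) (MonoidAlgebra.single q.1 1)
        * B (MonoidAlgebra.single p.2 1) (MonoidAlgebra.single q.2 1)

/-- The quantum integer `[n]_c`. -/
def qnum {𝔽 : Type} [Field 𝔽] (c : 𝔽) (n : ℕ) : 𝔽 :=
  (c ^ (n : ℤ) - c ^ (-(n : ℤ))) / (c - c⁻¹)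

/-- The quantum factorial `[n]_c!`. -/
def qfact {𝔽 : Type} [Field 𝔽] (c : 𝔽) (n : ℕ) : 𝔽 :=
  ∏ k ∈ Finset.range n, qnum c (k + 1)

/-- The divided power `θ_i^{(n)} = θ_i^n / [n]_{v_i}!`. -/
def θdiv [DecidableEq I] {𝔽 : Type} [Field 𝔽] (cd : CartanDatum I) (v : 𝔽)
    (i : I) (n : ℕ) : FA 𝔽 I :=
  (qfact (v ^ cd.d i) n)⁻¹ • (θ 𝔽 i) ^ n

/-- The twisted quantum Serre element
`D_{ij} = Σ_{k+k'=1-a_{ij}} (-1)^k β(i,j)^{-k} θ_i^{(k)} θ_j θ_i^{(k')}`. -/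
def Dij [DecidableEq I] {𝔽 : Type} [Field 𝔽] (cd : CartanDatum I) (v : 𝔽)
    (g : I → I → 𝔽) (i j : I) : FA 𝔽 I :=
  ∑ k ∈ Finset.range ((1 - cd.a i j).toNat + 1),
    ((-1 : 𝔽) ^ k * ((g i j)⁻¹) ^ k) •
      (θdiv cd v i k * θ 𝔽 j * θdiv cd v i ((1 - cd.a i j).toNat - k))

end
noncomputable section

variable {I : Type}

/-- The generator `i` of `ℤ[I]`. -/
def δZ (i : I) : I →₀ ℤ := Finsupp.single i 1

/-- The inclusion `ℕ[I] → ℤ[I]`. -/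
def nz (ν : I →₀ ℕ) : I →₀ ℤ := Finsupp.mapRange (fun n : ℕ => (n : ℤ)) rfl ν

/-- The multiplicative extension to `ℤ[I] × ℤ[I]` of generator values `g : I → I → 𝔽`. -/
def extZ {𝔽 : Type} [Field 𝔽] (g : I → I → 𝔽) (ν μ : I →₀ ℤ) : 𝔽 :=
  ν.prod fun i m => μ.prod fun j n => g i j ^ (m * n)

/-- The form `⟨i,j⟩ = v^{-i·j} β(i,j) ξ(j,i)`, extended multiplicatively to `ℤ[I]`. -/
def ang {𝔽 : Type} [Field 𝔽] (cd : CartanDatum I) (v : 𝔽) (βg ξg : I → I → 𝔽) :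
    (I →₀ ℤ) → (I →₀ ℤ) → 𝔽 :=
  extZ fun i j => v ^ (-(cd.c i j)) * βg i j * ξg j i

/-- The monomial in `F : I → A` associated with a word `w`. -/
def wordProd {A : Type} [Monoid A] (F : I → A) (w : FreeMonoid I) : A :=
  ((FreeMonoid.toList w).map F).prod

/-- `x` is homogeneous of degree `μ` in the subalgebra generated by the image of `F`. -/
def HomogIn (𝔽 : Type) [Field 𝔽] [DecidableEq I] {A : Type} [Ring A] [Algebra 𝔽 A]
    (F : I → A) (μ : I →₀ ℕ) (x : A) : Prop :=
  x ∈ Submodule.span 𝔽 {z | ∃ w, wt w = μ ∧ z = wordProd F w}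

end

/-!
Because `K'_τ₁ F_w J'_τ₂` is a basis of `̂'𝔣⁻`, an anti-homomorphism out of it is forced to be
`K'_τ₁ F_w J'_τ₂ ↦ ρ(F_w) ρ(K'_τ₁)`, and this formula is anti-multiplicative as soon as the
proposed images of `K'_ν` and `F_j` twisted-commute with the same scalar `⟨j,ν⟩ ξ(ν,j)⁻¹` as in
`̂'𝔣⁻`. For `𝒦'_ν` and `𝒮_j` this holds because `𝒦'_ν` acts diagonally on the basis
`K_τ₁ E_w J_τ₂` of `̂'𝔣⁺` with an eigenvalue multiplicative in the degree of `w`, while `𝒮_j`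
lowers that degree by `j`; `𝒥'_ν` acts trivially.

For (ii), the right-hand side is `m ∘ (a ⊗ b ↦ ρ⁻ b ⊗ ρ⁻ a)(Δ₋ y)`. The `y` for which this equals
`ρ⁻ y ∘ m` form a subalgebra, as `Δ₋` is multiplicative and the swapped action is
anti-multiplicative, and it contains every `F_j`: `Δ₋ F_j = J'_j ⊗ F_j + F_j ⊗ K'_j` and `𝒮_j` is a
`𝒦'_j`-twisted derivation.
-/

section Scalars

variable {I 𝔽 : Type} [Field 𝔽]

section extZ

variable {g : I → I → 𝔽}

lemma extZ_zero_left (μ : I →₀ ℤ) : extZ g 0 μ = 1 := Finsupp.prod_zero_index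

lemma extZ_zero_right (ν : I →₀ ℤ) : extZ g ν 0 = 1 := by
  simp [extZ, Finsupp.prod]

lemma extZ_single (i j : I) : extZ g (δZ i) (δZ j) = g i j := by
  simp [extZ, δZ, Finsupp.prod_single_index]

variable (hg : ∀ i j, g i j ≠ 0)
include hg

lemma extZ_add_left (ν ν' μ : I →₀ ℤ) : extZ g (ν + ν') μ = extZ g ν μ * extZ g ν' μ := by
  refine Finsupp.prod_add_index' (fun i => by simp [Finsupp.prod]) fun i m m' => ?_
  rw [← Finsupp.prod_mul]
  exact Finsupp.prod_congr fun j _ => by rw [add_mul, zpow_add₀ (hg i j)]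

lemma extZ_add_right (ν μ μ' : I →₀ ℤ) : extZ g ν (μ + μ') = extZ g ν μ * extZ g ν μ' := by
  rw [extZ, extZ, extZ, ← Finsupp.prod_mul]
  exact Finsupp.prod_congr fun i _ =>
    Finsupp.prod_add_index' (fun j => by simp) fun j n n' => by rw [mul_add, zpow_add₀ (hg i j)]

lemma extZ_ne_zero (ν μ : I →₀ ℤ) : extZ g ν μ ≠ 0 :=
  Finset.prod_ne_zero_iff.2 fun i _ => Finset.prod_ne_zero_iff.2 fun j _ => zpow_ne_zero _ (hg i j)

end extZ

/-- The scalar `⟨μ,ν⟩ ξ(ν,μ)⁻¹` by which `K'_ν` commutes past an element of degree `μ`. -/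
def commFactor (q ξ : I → I → 𝔽) (μ ν : I →₀ ℤ) : 𝔽 :=
  extZ q μ ν * (extZ ξ ν μ)⁻¹

/-- The eigenvalue of `𝒦'_ν` on `K_{τ₁} x J_{τ₂}` with `x` of degree `μ`. -/
def kEigen (q ξ : I → I → 𝔽) (τ₁ μ τ₂ ν : I →₀ ℤ) : 𝔽 :=
  extZ q τ₁ ν * commFactor q ξ μ ν * extZ ξ ν τ₂

variable {q ξ : I → I → 𝔽}

lemma commFactor_zero_left (ν : I →₀ ℤ) : commFactor q ξ 0 ν = 1 := by
  simp [commFactor, extZ_zero_left, extZ_zero_right]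

lemma commFactor_zero_right (μ : I →₀ ℤ) : commFactor q ξ μ 0 = 1 := by
  simp [commFactor, extZ_zero_left, extZ_zero_right]

lemma kEigen_zero_right (τ₁ μ τ₂ : I →₀ ℤ) : kEigen q ξ τ₁ μ τ₂ 0 = 1 := by
  simp [kEigen, commFactor_zero_right, extZ_zero_left, extZ_zero_right]

variable (hq : ∀ i j, q i j ≠ 0) (hξ : ∀ i j, ξ i j ≠ 0)
include hq hξ

lemma commFactor_ne_zero (μ ν : I →₀ ℤ) : commFactor q ξ μ ν ≠ 0 :=
  mul_ne_zero (extZ_ne_zero hq μ ν) (inv_ne_zero (extZ_ne_zero hξ ν μ))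

lemma commFactor_add_left (μ μ' ν : I →₀ ℤ) :
    commFactor q ξ (μ + μ') ν = commFactor q ξ μ ν * commFactor q ξ μ' ν := by
  simp only [commFactor, extZ_add_left hq, extZ_add_right hξ, mul_inv]
  ring

lemma commFactor_add_right (μ ν ν' : I →₀ ℤ) :
    commFactor q ξ μ (ν + ν') = commFactor q ξ μ ν * commFactor q ξ μ ν' := by
  simp only [commFactor, extZ_add_right hq, extZ_add_left hξ, mul_inv]
  ring

lemma kEigen_add_right (τ₁ μ τ₂ ν ν' : I →₀ ℤ) :
    kEigen q ξ τ₁ μ τ₂ (ν + ν') = kEigen q ξ τ₁ μ τ₂ ν * kEigen q ξ τ₁ μ τ₂ ν' := by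
  simp only [kEigen, extZ_add_right hq, commFactor_add_right hq hξ, extZ_add_left hξ]
  ring

lemma kEigen_add_weight (τ₁ μ μ' τ₂ ν : I →₀ ℤ) :
    kEigen q ξ τ₁ (μ + μ') τ₂ ν = commFactor q ξ μ' ν * kEigen q ξ τ₁ μ τ₂ ν := by
  simp only [kEigen, commFactor_add_left hq hξ]
  ring

end Scalars

section Generators

variable {I : Type}

lemma finsuppInt_induction {P : (I →₀ ℤ) → Prop} (zero : P 0)
    (add : ∀ a b, P a → P b → P (a + b)) (single : ∀ i, P (δZ i)) (neg_single : ∀ i, P (-δZ i)) :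
    ∀ ν, P ν := by
  intro ν
  induction ν using Finsupp.induction_linear with
  | zero => exact zero
  | add a b ha hb => exact add a b ha hb
  | single i n =>
    induction n using Int.induction_on with
    | zero => simpa using zero
    | succ n ih => simpa [δZ] using add _ _ ih (single i)
    | pred n ih => simpa [δZ, sub_eq_add_neg] using add _ _ ih (neg_single i)

variable {A : Type} [Monoid A] (F : I → A)

lemma wordProd_one : wordProd F 1 = 1 := rfl

lemma wordProd_of (i : I) : wordProd F (FreeMonoid.of i) = F i := by
  simp [wordProd, FreeMonoid.toList_of]

lemma wordProd_mul (w u : FreeMonoid I) : wordProd F (w * u) = wordProd F w * wordProd F u := by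
  simp [wordProd, FreeMonoid.toList_mul]

/-- The product `F_{i_n} ⋯ F_{i_1}` of a word `i_1 ⋯ i_n` in reverse order. -/
def antiWordProd (w : FreeMonoid I) : A :=
  MulOpposite.unop (wordProd (MulOpposite.op ∘ F) w)

lemma antiWordProd_one : antiWordProd F 1 = 1 := rfl

lemma antiWordProd_of (i : I) : antiWordProd F (FreeMonoid.of i) = F i := by
  simp [antiWordProd, wordProd_of]

lemma antiWordProd_mul (w u : FreeMonoid I) :
    antiWordProd F (w * u) = antiWordProd F u * antiWordProd F w := by
  simp [antiWordProd, wordProd_mul]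

variable [DecidableEq I]

lemma nz_wt_one : nz (wt (1 : FreeMonoid I)) = 0 := by
  simp [nz, wt]

lemma nz_wt_of (i : I) : nz (wt (FreeMonoid.of i)) = δZ i := by
  ext j
  simp [nz, wt, FreeMonoid.toList_of, δZ, Finsupp.single_apply]

lemma nz_wt_mul (w u : FreeMonoid I) : nz (wt (w * u)) = nz (wt w) + nz (wt u) := by
  ext j
  simp [nz, wt, FreeMonoid.toList_mul, ← Multiset.coe_add, Multiset.toFinsupp_add]

end Generators

section TwistedCommutation

variable {I : Type} {A : Type}

section AntiHom

variable {B : Type} [Monoid A] [Monoid B] {ρ : A → B}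
  (hρmul : ∀ x y, ρ (x * y) = ρ y * ρ x) (hρone : ρ 1 = 1)
include hρmul hρone

lemma antiHom_wordProd (F : I → A) (w : FreeMonoid I) :
    ρ (wordProd F w) = antiWordProd (ρ ∘ F) w := by
  induction w using FreeMonoid.recOn with
  | one => rw [wordProd_one, antiWordProd_one, hρone]
  | of_mul i w ih =>
    rw [wordProd_mul, wordProd_of, hρmul, ih, antiWordProd_mul, antiWordProd_of,
      Function.comp_apply]

end AntiHom

lemma antiHom_eq_of_single {B : Type} [Monoid A] [Monoid B] {ρ₁ ρ₂ : A → B}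
    (hmul₁ : ∀ x y, ρ₁ (x * y) = ρ₁ y * ρ₁ x) (hone₁ : ρ₁ 1 = 1)
    (hmul₂ : ∀ x y, ρ₂ (x * y) = ρ₂ y * ρ₂ x) (hone₂ : ρ₂ 1 = 1) {X : (I →₀ ℤ) → A}
    (hX0 : X 0 = 1) (hXadd : ∀ a b, X (a + b) = X a * X b)
    (hpos : ∀ i, ρ₁ (X (δZ i)) = ρ₂ (X (δZ i))) (hneg : ∀ i, ρ₁ (X (-δZ i)) = ρ₂ (X (-δZ i))) :
    ∀ ν, ρ₁ (X ν) = ρ₂ (X ν) :=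
  finsuppInt_induction (by rw [hX0, hone₁, hone₂])
    (fun a b ha hb => by rw [hXadd, hmul₁, hmul₂, ha, hb]) hpos hneg

variable {𝔽 : Type} [Field 𝔽] [Ring A] [Algebra 𝔽 A]

lemma mul_eq_smul_mul_of_inverse {a b y : A} {c c' : 𝔽} (hab : a * b = 1) (hba : b * a = 1)
    (hc : c' * c = 1) (h : a * y = c • (y * a)) : b * y = c' • (y * b) := by
  calc b * y = b * y * (a * b) := by rw [hab, mul_one]
    _ = c' • (b * (c • (y * a)) * b) := by
      rw [mul_smul_comm, smul_mul_assoc, smul_smul, hc, one_smul]; simp only [mul_assoc]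
    _ = c' • (y * b) := by rw [← h, ← mul_assoc, hba, one_mul]

lemma mul_eq_smul_mul_of_single {K : (I →₀ ℤ) → A} (hK0 : K 0 = 1)
    (hKadd : ∀ a b, K (a + b) = K a * K b) {c : (I →₀ ℤ) → 𝔽} (hc0 : c 0 = 1)
    (hcadd : ∀ a b, c (a + b) = c a * c b) {y : A}
    (h : ∀ i, K (δZ i) * y = c (δZ i) • (y * K (δZ i))) : ∀ ν, K ν * y = c ν • (y * K ν) := by
  have hinv : ∀ a, K a * K (-a) = 1 ∧ K (-a) * K a = 1 ∧ c (-a) * c a = 1 := fun a => by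
    simp only [← hKadd, ← hcadd, add_neg_cancel, neg_add_cancel, hK0, hc0, and_self]
  refine finsuppInt_induction (by rw [hK0, hc0, one_smul, one_mul, mul_one])
    (fun a b ha hb => ?_) h fun i => ?_
  · rw [hKadd, mul_assoc, hb, mul_smul_comm, ← mul_assoc, ha, hcadd, mul_comm, ← smul_smul,
      smul_mul_assoc, mul_assoc]
  · obtain ⟨h₁, h₂, h₃⟩ := hinv (δZ i)
    exact mul_eq_smul_mul_of_inverse h₁ h₂ h₃ (h i)

variable [DecidableEq I]

lemma mul_wordProd_eq_smul {F : I → A} {x : A} {c : (I →₀ ℤ) → 𝔽} (hc0 : c 0 = 1)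
    (hcadd : ∀ a b, c (a + b) = c a * c b) (h : ∀ j, x * F j = c (δZ j) • (F j * x))
    (w : FreeMonoid I) : x * wordProd F w = c (nz (wt w)) • (wordProd F w * x) := by
  induction w using FreeMonoid.recOn with
  | one => rw [wordProd_one, nz_wt_one, hc0, one_smul, one_mul, mul_one]
  | of_mul i w ih =>
    rw [wordProd_mul, wordProd_of, nz_wt_mul, nz_wt_of, hcadd, ← mul_assoc, h, smul_mul_assoc,
      mul_assoc, ih, mul_smul_comm, smul_smul, mul_assoc]

end TwistedCommutation

lemma LinearMap.map_mul_rev_of_basis {ι 𝔽 A B : Type} [Field 𝔽] [Ring A] [Algebra 𝔽 A] [Ring B]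
    [Algebra 𝔽 B] (b : Module.Basis ι 𝔽 A) {ρ : A →ₗ[𝔽] B}
    (h : ∀ i j, ρ (b i * b j) = ρ (b j) * ρ (b i)) (x y : A) : ρ (x * y) = ρ y * ρ x := by
  have key : (LinearMap.mul 𝔽 A).compr₂ ρ = ((LinearMap.mul 𝔽 B).flip).compl₁₂ ρ ρ :=
    LinearMap.ext_basis b b h
  exact LinearMap.congr_fun₂ key x y

section Borel

variable {I 𝔽 : Type} [Field 𝔽] {q ξ : I → I → 𝔽}
variable {Am : Type} [Ring Am] [Algebra 𝔽 Am] {F : I → Am} {K' J' : (I →₀ ℤ) → Am}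
  {bm : Module.Basis ((I →₀ ℤ) × FreeMonoid I × (I →₀ ℤ)) 𝔽 Am}
  (hbm : ∀ p, bm p = K' p.1 * wordProd F p.2.1 * J' p.2.2)

variable (hq : ∀ i j, q i j ≠ 0) (hξ : ∀ i j, ξ i j ≠ 0)
  (hK'0 : K' 0 = 1) (hK'add : ∀ a b, K' (a + b) = K' a * K' b)
  (hJ'0 : J' 0 = 1) (hJ'add : ∀ a b, J' (a + b) = J' a * J' b)
  (hK'J' : ∀ a b, K' a * J' b = J' b * K' a)
  (hK'F : ∀ i j : I, K' (δZ i) * F j = (extZ q (δZ j) (δZ i) * (ξ i j)⁻¹) • (F j * K' (δZ i)))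
  (hJ'F : ∀ i j : I, J' (δZ i) * F j = F j * J' (δZ i))

include hbm hK'0 hK'add hJ'0 hJ'add in
lemma antiHom_ext {B : Type} [Ring B] [Algebra 𝔽 B] {ρ₁ ρ₂ : Am →ₗ[𝔽] B}
    (hmul₁ : ∀ x y, ρ₁ (x * y) = ρ₁ y * ρ₁ x) (hone₁ : ρ₁ 1 = 1)
    (hmul₂ : ∀ x y, ρ₂ (x * y) = ρ₂ y * ρ₂ x) (hone₂ : ρ₂ 1 = 1)
    (hF : ∀ j, ρ₁ (F j) = ρ₂ (F j))
    (hK'pos : ∀ i, ρ₁ (K' (δZ i)) = ρ₂ (K' (δZ i)))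
    (hK'neg : ∀ i, ρ₁ (K' (-δZ i)) = ρ₂ (K' (-δZ i)))
    (hJ'pos : ∀ i, ρ₁ (J' (δZ i)) = ρ₂ (J' (δZ i)))
    (hJ'neg : ∀ i, ρ₁ (J' (-δZ i)) = ρ₂ (J' (-δZ i))) :
    ρ₁ = ρ₂ :=
  bm.ext fun p => by
    rw [hbm, hmul₁, hmul₁, hmul₂, hmul₂, antiHom_wordProd hmul₁ hone₁,
      antiHom_wordProd hmul₂ hone₂, show ρ₁ ∘ F = ρ₂ ∘ F from funext hF,
      antiHom_eq_of_single hmul₁ hone₁ hmul₂ hone₂ hK'0 hK'add hK'pos hK'neg,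
      antiHom_eq_of_single hmul₁ hone₁ hmul₂ hone₂ hJ'0 hJ'add hJ'pos hJ'neg]

include hJ'0 hJ'add hJ'F in
lemma J'_commute_wordProd (ν : I →₀ ℤ) (w : FreeMonoid I) : Commute (J' ν) (wordProd F w) := by
  have hF (j : I) : ∀ ν, Commute (J' ν) (F j) := by
    refine finsuppInt_induction (by rw [hJ'0]; exact Commute.one_left _)
      (fun a b ha hb => by rw [hJ'add]; exact ha.mul_left hb) (fun i => hJ'F i j) fun i => ?_
    let u : Amˣ := ⟨J' (δZ i), J' (-δZ i), by rw [← hJ'add, add_neg_cancel, hJ'0],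
      by rw [← hJ'add, neg_add_cancel, hJ'0]⟩
    exact Commute.units_inv_left (u := u) (hJ'F i j)
  exact Commute.list_prod_right _ _ fun y hy => by
    obtain ⟨j, -, rfl⟩ := List.mem_map.1 hy
    exact hF j ν

variable [DecidableEq I]

include hq hξ hK'0 hK'add hK'F in
lemma K'_mul_wordProd (ν : I →₀ ℤ) (w : FreeMonoid I) :
    K' ν * wordProd F w = commFactor q ξ (nz (wt w)) ν • (wordProd F w * K' ν) := by
  refine mul_wordProd_eq_smul (c := fun μ => commFactor q ξ μ ν) (commFactor_zero_left ν)
    (fun μ μ' => commFactor_add_left hq hξ μ μ' ν) (fun j => ?_) w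
  refine mul_eq_smul_mul_of_single hK'0 hK'add (commFactor_zero_right _)
    (commFactor_add_right hq hξ _) (fun i => ?_) ν
  rw [hK'F, commFactor, extZ_single, extZ_single]

include hq hξ hK'0 hK'add hJ'0 hJ'add hK'J' hK'F hJ'F hbm in
lemma basis_mul_basis (p p' : (I →₀ ℤ) × FreeMonoid I × (I →₀ ℤ)) :
    commFactor q ξ (nz (wt p.2.1)) p'.1 • (bm p * bm p')
      = bm (p.1 + p'.1, p.2.1 * p'.2.1, p.2.2 + p'.2.2) := by
  obtain ⟨τ₁, w, τ₂⟩ := p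
  obtain ⟨σ₁, u, σ₂⟩ := p'
  have hJ' : J' τ₂ * (K' σ₁ * (wordProd F u * J' σ₂))
      = K' σ₁ * (wordProd F u * (J' τ₂ * J' σ₂)) := by
    rw [← mul_assoc, ← hK'J', mul_assoc, ← mul_assoc (J' τ₂),
      (J'_commute_wordProd hJ'0 hJ'add hJ'F τ₂ u).eq, mul_assoc]
  simp only [hbm, hK'add, hJ'add, wordProd_mul, mul_assoc, hJ']
  rw [← mul_assoc (K' σ₁) (wordProd F w), K'_mul_wordProd hq hξ hK'0 hK'add hK'F σ₁ w]
  simp only [smul_mul_assoc, mul_smul_comm, mul_assoc]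

include hq hξ hK'0 hK'add hJ'0 hJ'add hK'J' hK'F hJ'F hbm in
lemma exists_antiHom {B : Type} [Ring B] [Algebra 𝔽 B] {k : (I →₀ ℤ) → B} (hk0 : k 0 = 1)
    (hkadd : ∀ a b, k (a + b) = k a * k b) {f : I → B}
    (hfk : ∀ j ν, f j * k ν = commFactor q ξ (δZ j) ν • (k ν * f j)) :
    ∃ ρ : Am →ₗ[𝔽] B, (∀ x y, ρ (x * y) = ρ y * ρ x) ∧ ρ 1 = 1 ∧ (∀ j, ρ (F j) = f j) ∧
      (∀ ν, ρ (K' ν) = k ν) ∧ ∀ ν, ρ (J' ν) = 1 := by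
  set ρ := bm.constr 𝔽 fun p => antiWordProd f p.2.1 * k p.1
  have hρb (p) : ρ (bm p) = antiWordProd f p.2.1 * k p.1 := bm.constr_basis 𝔽 _ p
  have hρ : ∀ τ₁ w τ₂, ρ (K' τ₁ * wordProd F w * J' τ₂) = antiWordProd f w * k τ₁ :=
    fun τ₁ w τ₂ => by rw [← hbm (τ₁, w, τ₂), hρb]
  have hcomm (w : FreeMonoid I) (ν : I →₀ ℤ) :
      antiWordProd f w * k ν = commFactor q ξ (nz (wt w)) ν • (k ν * antiWordProd f w) := by
    have h := mul_wordProd_eq_smul (x := MulOpposite.op (k ν)) (F := MulOpposite.op ∘ f)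
      (c := fun μ => commFactor q ξ μ ν) (commFactor_zero_left ν)
      (fun μ μ' => commFactor_add_left hq hξ μ μ' ν)
      (fun j => by simp only [Function.comp_apply, ← MulOpposite.op_mul, hfk, MulOpposite.op_smul])
      w
    exact congrArg MulOpposite.unop h
  refine ⟨ρ, LinearMap.map_mul_rev_of_basis bm fun p p' => ?_, ?_, fun j => ?_, fun ν => ?_,
    fun ν => ?_⟩
  · obtain ⟨τ₁, w, τ₂⟩ := p
    obtain ⟨σ₁, u, σ₂⟩ := p'
    refine smul_right_injective B (commFactor_ne_zero hq hξ (nz (wt w)) σ₁) ?_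
    beta_reduce
    rw [← map_smul, basis_mul_basis hbm hq hξ hK'0 hK'add hJ'0 hJ'add hK'J' hK'F hJ'F
      (τ₁, w, τ₂) (σ₁, u, σ₂), hρb, hρb, hρb]
    dsimp only
    rw [antiWordProd_mul, add_comm τ₁, hkadd, mul_assoc, ← mul_assoc (antiWordProd f w), hcomm]
    simp only [mul_smul_comm, smul_mul_assoc, mul_assoc]
  · simpa [hK'0, hJ'0, wordProd_one, antiWordProd_one, hk0] using hρ 0 1 0
  · simpa [hK'0, hJ'0, wordProd_of, antiWordProd_of, hk0] using hρ 0 (FreeMonoid.of j) 0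
  · simpa [hJ'0, wordProd_one, antiWordProd_one] using hρ ν 1 0
  · simpa [hK'0, wordProd_one, antiWordProd_one, hk0] using hρ 0 1 ν

end Borel

section Positive

variable {I 𝔽 : Type} [DecidableEq I] [Field 𝔽] {q ξ : I → I → 𝔽}
variable {Ap : Type} [Ring Ap] [Algebra 𝔽 Ap] {E : I → Ap} {K Jp : (I →₀ ℤ) → Ap}
  {bp : Module.Basis ((I →₀ ℤ) × FreeMonoid I × (I →₀ ℤ)) 𝔽 Ap}
  (hbp : ∀ p, bp p = K p.1 * wordProd E p.2.1 * Jp p.2.2)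

omit [DecidableEq I] in
include hbp in
lemma eq_one_of_fixes_basis {cJ' : Module.End 𝔽 Ap}
    (hcJ' : ∀ (τ₁ τ₂ : I →₀ ℤ) (w : FreeMonoid I),
      cJ' (K τ₁ * wordProd E w * Jp τ₂) = K τ₁ * wordProd E w * Jp τ₂) : cJ' = 1 :=
  bp.ext fun p => by rw [hbp, hcJ', Module.End.one_apply]

def weightSpace (cK' : (I →₀ ℤ) → Module.End 𝔽 Ap) (q ξ : I → I → 𝔽) (τ₁ μ τ₂ : I →₀ ℤ) :
    Submodule 𝔽 Ap :=
  ⨅ ν, (cK' ν).eigenspace (kEigen q ξ τ₁ μ τ₂ ν)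

omit [DecidableEq I] in
lemma mem_weightSpace {cK' : (I →₀ ℤ) → Module.End 𝔽 Ap} {τ₁ μ τ₂ : I →₀ ℤ} {x : Ap} :
    x ∈ weightSpace cK' q ξ τ₁ μ τ₂ ↔ ∀ ν, cK' ν x = kEigen q ξ τ₁ μ τ₂ ν • x := by
  simp [weightSpace]

variable {cK' : (I →₀ ℤ) → Module.End 𝔽 Ap}
  (hcK' : ∀ (ν τ₁ τ₂ : I →₀ ℤ) (w : FreeMonoid I),
    cK' ν (K τ₁ * wordProd E w * Jp τ₂)
      = (extZ q τ₁ ν * extZ q (nz (wt w)) ν * (extZ ξ ν (nz (wt w)))⁻¹ * extZ ξ ν τ₂) •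
        (K τ₁ * wordProd E w * Jp τ₂))

include hcK' in
lemma monomial_mem_weightSpace (τ₁ τ₂ : I →₀ ℤ) (w : FreeMonoid I) :
    K τ₁ * wordProd E w * Jp τ₂ ∈ weightSpace cK' q ξ τ₁ (nz (wt w)) τ₂ :=
  mem_weightSpace.2 fun ν => by rw [hcK', kEigen, commFactor, mul_assoc (extZ q τ₁ ν)]

include hbp hcK' in
lemma cK'_basis (ν τ₁ τ₂ : I →₀ ℤ) (w : FreeMonoid I) :
    cK' ν (bp (τ₁, w, τ₂)) = kEigen q ξ τ₁ (nz (wt w)) τ₂ ν • bp (τ₁, w, τ₂) := by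
  rw [hbp]
  exact mem_weightSpace.1 (monomial_mem_weightSpace hcK' τ₁ τ₂ w) ν

include hbp hcK' in
lemma cK'_zero : cK' 0 = 1 :=
  bp.ext fun ⟨τ₁, w, τ₂⟩ => by
    rw [cK'_basis hbp hcK', kEigen_zero_right, one_smul, Module.End.one_apply]

include hbp hcK' in
lemma cK'_add (hq : ∀ i j, q i j ≠ 0) (hξ : ∀ i j, ξ i j ≠ 0) (a b : I →₀ ℤ) :
    cK' (a + b) = cK' a * cK' b :=
  bp.ext fun ⟨τ₁, w, τ₂⟩ => by
    rw [Module.End.mul_apply, cK'_basis hbp hcK', cK'_basis hbp hcK', map_smul,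
      cK'_basis hbp hcK', smul_smul, kEigen_add_right hq hξ, mul_comm]

variable (hK0 : K 0 = 1) (hJ0 : Jp 0 = 1) {Sj : I → Module.End 𝔽 Ap}
  (hSj0 : ∀ (j : I) (τ₁ τ₂ : I →₀ ℤ), Sj j (K τ₁ * Jp τ₂) = 0)
  (hSjE : ∀ j i : I, Sj j (E i) = if i = j then 1 else 0)
  (hSjmul : ∀ (j : I) (x y : Ap), Sj j (x * y) = Sj j x * y + cK' (δZ j) x * Sj j y)

lemma mul_mem_span_image {A : Type} [Ring A] [Algebra 𝔽 A] (a : A) {s t : Set A}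
    (hst : (a * ·) '' s ⊆ t) {x : A} (hx : x ∈ Submodule.span 𝔽 s) :
    a * x ∈ Submodule.span 𝔽 t := by
  have h := Submodule.mem_map_of_mem (f := LinearMap.mulLeft 𝔽 a) hx
  rw [Submodule.map_span] at h
  exact Submodule.span_mono hst h

include hcK' hK0 hJ0 hSj0 hSjE hSjmul in
lemma Sj_wordProd_mul_mem_span (j : I) (τ₂ : I →₀ ℤ) (w : FreeMonoid I) :
    Sj j (wordProd E w * Jp τ₂) ∈ Submodule.span 𝔽
      ((fun u => wordProd E u * Jp τ₂) '' {u | nz (wt u) = nz (wt w) - δZ j}) := by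
  induction w using FreeMonoid.recOn with
  | one =>
    rw [wordProd_one, one_mul, ← one_mul (Jp τ₂), ← hK0, hSj0]
    exact zero_mem _
  | of_mul i w ih =>
    have hE : cK' (δZ j) (E i) = kEigen q ξ 0 (δZ i) 0 (δZ j) • E i := by
      simpa [hK0, hJ0, wordProd_of, nz_wt_of] using
        mem_weightSpace.1 (monomial_mem_weightSpace hcK' 0 0 (FreeMonoid.of i)) (δZ j)
    rw [wordProd_mul, wordProd_of, mul_assoc, hSjmul, hSjE, hE, smul_mul_assoc]
    refine add_mem ?_ (Submodule.smul_mem _ _ (mul_mem_span_image (E i) ?_ ih))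
    · split_ifs with hij
      · subst hij
        exact Submodule.subset_span ⟨w, by simp [nz_wt_mul, nz_wt_of], (one_mul _).symm⟩
      · simp
    · rintro _ ⟨_, ⟨u, hu, rfl⟩, rfl⟩
      refine ⟨FreeMonoid.of i * u, ?_, by simp [wordProd_mul, wordProd_of, mul_assoc]⟩
      change nz (wt u) = _ at hu
      change nz (wt (FreeMonoid.of i * u)) = _
      rw [nz_wt_mul, nz_wt_of, hu, nz_wt_mul, nz_wt_of, add_sub_assoc]

include hbp hcK' hK0 hJ0 hSj0 hSjE hSjmul in
lemma Sj_basis_mem_weightSpace (j : I) (τ₁ τ₂ : I →₀ ℤ) (w : FreeMonoid I) :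
    Sj j (bp (τ₁, w, τ₂)) ∈ weightSpace cK' q ξ τ₁ (nz (wt w) - δZ j) τ₂ := by
  have hK : cK' (δZ j) (K τ₁) = kEigen q ξ τ₁ 0 0 (δZ j) • K τ₁ := by
    simpa [hJ0, wordProd_one, nz_wt_one] using
      mem_weightSpace.1 (monomial_mem_weightSpace hcK' τ₁ 0 1) (δZ j)
  have hSK : Sj j (K τ₁) = 0 := by simpa [hJ0] using hSj0 j τ₁ 0
  rw [hbp, mul_assoc, hSjmul, hSK, zero_mul, zero_add, hK, smul_mul_assoc]
  refine Submodule.smul_mem _ _ ?_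
  refine (Submodule.span_le.2 ?_) (mul_mem_span_image (K τ₁) subset_rfl
    (Sj_wordProd_mul_mem_span hcK' hK0 hJ0 hSj0 hSjE hSjmul j τ₂ w))
  rintro _ ⟨_, ⟨u, hu, rfl⟩, rfl⟩
  change nz (wt u) = _ at hu
  rw [← hu]
  change K τ₁ * (wordProd E u * Jp τ₂) ∈ _
  rw [← mul_assoc]
  exact monomial_mem_weightSpace hcK' τ₁ τ₂ u

include hbp hcK' hK0 hJ0 hSj0 hSjE hSjmul in
/-- `S_j` lowers the weight by `j`, hence twisted-commutes with every `𝒦'_ν`. -/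
lemma Sj_mul_cK' (hq : ∀ i j, q i j ≠ 0) (hξ : ∀ i j, ξ i j ≠ 0) (j : I) (ν : I →₀ ℤ) :
    Sj j * cK' ν = commFactor q ξ (δZ j) ν • (cK' ν * Sj j) :=
  bp.ext fun ⟨τ₁, w, τ₂⟩ => by
    have hmem := mem_weightSpace.1
      (Sj_basis_mem_weightSpace hbp hcK' hK0 hJ0 hSj0 hSjE hSjmul j τ₁ τ₂ w) ν
    rw [Module.End.mul_apply, LinearMap.smul_apply, Module.End.mul_apply, hmem,
      cK'_basis hbp hcK', map_smul, smul_smul, ← kEigen_add_weight hq hξ, sub_add_cancel]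

end Positive

section Sweedler

variable {𝔽 A M : Type} [Field 𝔽] [Ring A] [Algebra 𝔽 A] [Ring M] [Algebra 𝔽 M]

/-- `a ⊗ b ↦ ρ b ⊗ ρ a`; the swap makes it an anti-homomorphism whenever `ρ` is one. -/
def flipTensorAction (ρ : A →ₗ[𝔽] Module.End 𝔽 M) : A ⊗[𝔽] A →ₗ[𝔽] Module.End 𝔽 (M ⊗[𝔽] M) :=
  TensorProduct.lift ((TensorProduct.mapBilinear (RingHom.id 𝔽) M M M M).compl₁₂ ρ ρ).flip

variable {ρ : A →ₗ[𝔽] Module.End 𝔽 M}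

lemma flipTensorAction_tmul (a b : A) :
    flipTensorAction ρ (a ⊗ₜ b) = TensorProduct.map (ρ b) (ρ a) := by
  simp [flipTensorAction]

lemma mul'_flipTensorAction_sum {n : ℕ} (a b : Fin n → A) (x x' : M) :
    LinearMap.mul' 𝔽 M (flipTensorAction ρ (∑ k, a k ⊗ₜ[𝔽] b k) (x ⊗ₜ x'))
      = ∑ k, ρ (b k) x * ρ (a k) x' := by
  simp [flipTensorAction_tmul]

lemma comp_mul'_eq_of_skewPrimitive (Δ : A →ₐ[𝔽] A ⊗[𝔽] A) {y g h : A}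
    (hΔ : Δ y = g ⊗ₜ y + y ⊗ₜ h) (hg : ρ g = 1)
    (hy : ∀ x x', ρ y (x * x') = ρ y x * x' + ρ h x * ρ y x') :
    ρ y ∘ₗ LinearMap.mul' 𝔽 M = LinearMap.mul' 𝔽 M ∘ₗ flipTensorAction ρ (Δ y) :=
  TensorProduct.ext' fun x x' => by simp [hΔ, flipTensorAction_tmul, hg, hy]

variable (hρmul : ∀ x y, ρ (x * y) = ρ y * ρ x) (hρone : ρ 1 = 1)
include hρmul

lemma flipTensorAction_mul (x y : A ⊗[𝔽] A) :
    flipTensorAction ρ (x * y) = flipTensorAction ρ y * flipTensorAction ρ x := by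
  induction x using TensorProduct.induction_on with
  | zero => simp
  | add x x' hx hx' => rw [add_mul, map_add, map_add, hx, hx', mul_add]
  | tmul a b =>
    induction y using TensorProduct.induction_on with
    | zero => simp
    | add y y' hy hy' => rw [mul_add, map_add, map_add, hy, hy', add_mul]
    | tmul c d =>
      rw [Algebra.TensorProduct.tmul_mul_tmul, flipTensorAction_tmul, flipTensorAction_tmul,
        flipTensorAction_tmul, hρmul, hρmul, TensorProduct.map_mul]

include hρone in
/-- The elements `y` with `ρ y (x x') = Σ ρ y₂ x ⋅ ρ y₁ x'` form a subalgebra. -/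
theorem comp_mul'_eq_of_mem_adjoin (Δ : A →ₐ[𝔽] A ⊗[𝔽] A) {s : Set A}
    (hs : ∀ y ∈ s,
      ρ y ∘ₗ LinearMap.mul' 𝔽 M = LinearMap.mul' 𝔽 M ∘ₗ flipTensorAction ρ (Δ y))
    {y : A} (hy : y ∈ Algebra.adjoin 𝔽 s) :
    ρ y ∘ₗ LinearMap.mul' 𝔽 M = LinearMap.mul' 𝔽 M ∘ₗ flipTensorAction ρ (Δ y) := by
  induction hy using Algebra.adjoin_induction with
  | mem y hy => exact hs y hy
  | algebraMap r =>
    have hT : flipTensorAction ρ 1 = 1 := by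
      rw [Algebra.TensorProduct.one_def, flipTensorAction_tmul, hρone, TensorProduct.map_one]
    simp only [Algebra.algebraMap_eq_smul_one, map_smul, map_one, hρone, hT,
      LinearMap.smul_comp, LinearMap.comp_smul, Module.End.one_eq_id, LinearMap.id_comp,
      LinearMap.comp_id]
  | add y y' _ _ hy hy' => rw [map_add, map_add, map_add, LinearMap.add_comp, hy, hy',
      LinearMap.comp_add]
  | mul y y' _ _ hy hy' =>
    rw [hρmul, Module.End.mul_eq_comp, LinearMap.comp_assoc, hy, ← LinearMap.comp_assoc, hy',
      map_mul, flipTensorAction_mul hρmul, Module.End.mul_eq_comp, LinearMap.comp_assoc]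

end Sweedler

theorem exists_unique_rho_minus_and_sweedler_general
    {I : Type} [DecidableEq I] (cd : CartanDatum I)
    {𝔽 : Type} [Field 𝔽] [CharZero 𝔽] (v : 𝔽) (hv : Transcendental ℚ v)
    (βg ξg : I → I → 𝔽)
    (hββ : ∀ i j, βg i j * βg j i = 1)
    (hξne : ∀ i j, ξg i j ≠ 0)
    {Ap : Type} [Ring Ap] [Algebra 𝔽 Ap]
    (E : I → Ap) (K Jp : (I →₀ ℤ) → Ap)
    (hK0 : K 0 = 1)
    (hJ0 : Jp 0 = 1)
    (bp : Module.Basis ((I →₀ ℤ) × FreeMonoid I × (I →₀ ℤ)) 𝔽 Ap)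
    (hbp : ∀ p, bp p = K p.1 * wordProd E p.2.1 * Jp p.2.2)
    {Am : Type} [Ring Am] [Algebra 𝔽 Am]
    (F : I → Am) (K' J' : (I →₀ ℤ) → Am)
    (hK'0 : K' 0 = 1) (hK'add : ∀ a b, K' (a + b) = K' a * K' b)
    (hJ'0 : J' 0 = 1) (hJ'add : ∀ a b, J' (a + b) = J' a * J' b)
    (hK'J' : ∀ a b, K' a * J' b = J' b * K' a)
    (hK'F : ∀ i j : I, K' (δZ i) * F j
      = (ang cd v βg ξg (δZ j) (δZ i) * (ξg i j)⁻¹) • (F j * K' (δZ i)))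
    (hJ'F : ∀ i j : I, J' (δZ i) * F j = F j * J' (δZ i))
    (bm : Module.Basis ((I →₀ ℤ) × FreeMonoid I × (I →₀ ℤ)) 𝔽 Am)
    (hbm : ∀ p, bm p = K' p.1 * wordProd F p.2.1 * J' p.2.2)
    (cK' cJ' : (I →₀ ℤ) → (Ap →ₗ[𝔽] Ap))
    (hcK' : ∀ (ν τ₁ τ₂ : I →₀ ℤ) (w : FreeMonoid I),
      cK' ν (K τ₁ * wordProd E w * Jp τ₂)
        = (ang cd v βg ξg τ₁ ν * ang cd v βg ξg (nz (wt w)) ν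
            * (extZ ξg ν (nz (wt w)))⁻¹ * extZ ξg ν τ₂) • (K τ₁ * wordProd E w * Jp τ₂))
    (hcJ' : ∀ (ν τ₁ τ₂ : I →₀ ℤ) (w : FreeMonoid I),
      cJ' ν (K τ₁ * wordProd E w * Jp τ₂) = K τ₁ * wordProd E w * Jp τ₂)
    (Sj : I → (Ap →ₗ[𝔽] Ap))
    (hSj0 : ∀ (j : I) (τ₁ τ₂ : I →₀ ℤ), Sj j (K τ₁ * Jp τ₂) = 0)
    (hSjE : ∀ j i : I, Sj j (E i) = if i = j then 1 else 0)
    (hSjmul : ∀ (j : I) (x y : Ap), Sj j (x * y) = Sj j x * y + cK' (δZ j) x * Sj j y)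
    (G : (I →₀ ℕ) → 𝔽)
    (Δm : Am →ₐ[𝔽] (Am ⊗[𝔽] Am))
    (hΔmF : ∀ i, Δm (F i) = J' (δZ i) ⊗ₜ[𝔽] F i + F i ⊗ₜ[𝔽] K' (δZ i))
    :
    (∃! ρm : Am →ₗ[𝔽] Module.End 𝔽 Ap,
      (∀ x y : Am, ρm (x * y) = ρm y * ρm x) ∧ ρm 1 = 1 ∧
      (∀ j : I, ρm (F j) = (G (δN j) * (v ^ (-(cd.d j)) - v ^ (cd.d j))⁻¹) • Sj j) ∧
      (∀ i : I, ρm (K' (δZ i)) = cK' (δZ i)) ∧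
      (∀ i : I, ρm (K' (-(δZ i))) = cK' (-(δZ i))) ∧
      (∀ i : I, ρm (J' (δZ i)) = cJ' (δZ i)) ∧
      (∀ i : I, ρm (J' (-(δZ i))) = cJ' (-(δZ i)))) ∧
    (∀ ρm : Am →ₗ[𝔽] Module.End 𝔽 Ap,
      ((∀ x y : Am, ρm (x * y) = ρm y * ρm x) ∧ ρm 1 = 1 ∧
       (∀ j : I, ρm (F j) = (G (δN j) * (v ^ (-(cd.d j)) - v ^ (cd.d j))⁻¹) • Sj j) ∧
       (∀ i : I, ρm (K' (δZ i)) = cK' (δZ i)) ∧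
       (∀ i : I, ρm (K' (-(δZ i))) = cK' (-(δZ i))) ∧
       (∀ i : I, ρm (J' (δZ i)) = cJ' (δZ i)) ∧
       (∀ i : I, ρm (J' (-(δZ i))) = cJ' (-(δZ i)))) →
      ∀ y ∈ Algebra.adjoin 𝔽 (Set.range F), ∀ x' x'', x' ∈ Algebra.adjoin 𝔽 (Set.range E) →
        x'' ∈ Algebra.adjoin 𝔽 (Set.range E) →
        ∀ (n : ℕ) (a b : Fin n → Am), Δm y = ∑ k, a k ⊗ₜ[𝔽] b k →
        ρm y (x' * x'') = ∑ k, ρm (b k) x' * ρm (a k) x'') := by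
  have hq : ∀ i j, v ^ (-(cd.c i j)) * βg i j * ξg j i ≠ 0 := fun i j =>
    mul_ne_zero (mul_ne_zero (zpow_ne_zero _ fun h => hv (h ▸ isAlgebraic_zero))
      (left_ne_zero_of_mul_eq_one (hββ i j))) (hξne j i)
  have hcJ'1 (ν : I →₀ ℤ) : cJ' ν = 1 := eq_one_of_fixes_basis hbp (hcJ' ν)
  have hcK'0 := cK'_zero hbp hcK'
  have hcK'add := cK'_add hbp hcK' hq hξne
  set s : I → 𝔽 := fun j => G (δN j) * (v ^ (-(cd.d j)) - v ^ (cd.d j))⁻¹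
  obtain ⟨ρ, hρmul, hρone, hρF, hρK', hρJ'⟩ :=
    exists_antiHom hbm hq hξne hK'0 hK'add hJ'0 hJ'add hK'J' hK'F hJ'F hcK'0 hcK'add
      (f := fun j => s j • Sj j) fun j ν => by
        rw [smul_mul_assoc, Sj_mul_cK' hbp hcK' hK0 hJ0 hSj0 hSjE hSjmul hq hξne, smul_comm,
          mul_smul_comm]
  refine ⟨⟨ρ, ⟨hρmul, hρone, hρF, fun i => hρK' _, fun i => hρK' _,
    fun i => by rw [hρJ', hcJ'1], fun i => by rw [hρJ', hcJ'1]⟩, ?_⟩, ?_⟩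
  · rintro ρ' ⟨hmul, hone, hF, hKp, hKm, hJp, hJm⟩
    exact antiHom_ext hbm hK'0 hK'add hJ'0 hJ'add hmul hone hρmul hρone
      (fun j => by rw [hF, hρF]) (fun i => by rw [hKp, hρK']) (fun i => by rw [hKm, hρK'])
      (fun i => by rw [hJp, hρJ', hcJ'1]) (fun i => by rw [hJm, hρJ', hcJ'1])
  · rintro ρ' ⟨hmul, hone, hF, hKp, -, hJp, -⟩ y hy x' x'' - - n a b hΔ
    have hgen : ∀ z ∈ Set.range F, ρ' z ∘ₗ LinearMap.mul' 𝔽 Ap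
        = LinearMap.mul' 𝔽 Ap ∘ₗ flipTensorAction ρ' (Δm z) := by
      rintro _ ⟨j, rfl⟩
      refine comp_mul'_eq_of_skewPrimitive Δm (hΔmF j) (by rw [hJp, hcJ'1]) fun x x' => ?_
      rw [hF, hKp, LinearMap.smul_apply, LinearMap.smul_apply, LinearMap.smul_apply, hSjmul,
        smul_add, smul_mul_assoc, mul_smul_comm]
    rw [← mul'_flipTensorAction_sum, ← hΔ]
    simpa using LinearMap.congr_fun (comp_mul'_eq_of_mem_adjoin hmul hone Δm hgen hy) (x' ⊗ₜ x'')

theorem exists_unique_rho_minus_and_sweedler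
    {I : Type} [Fintype I] [DecidableEq I] (cd : CartanDatum I)
    {𝔽 : Type} [Field 𝔽] [CharZero 𝔽] (v : 𝔽) (hv : Transcendental ℚ v)
    (βg ξg : I → I → 𝔽)
    (hββ : ∀ i j, βg i j * βg j i = 1) (hβii : ∀ i, βg i i = 1)
    (hξsymm : ∀ i j, ξg i j = ξg j i) (hξne : ∀ i j, ξg i j ≠ 0)
    {Ap : Type} [Ring Ap] [Algebra 𝔽 Ap]
    (E : I → Ap) (K Jp : (I →₀ ℤ) → Ap)
    (hK0 : K 0 = 1) (hKadd : ∀ a b, K (a + b) = K a * K b)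
    (hJ0 : Jp 0 = 1) (hJadd : ∀ a b, Jp (a + b) = Jp a * Jp b)
    (hKJ : ∀ a b, K a * Jp b = Jp b * K a)
    (hKE : ∀ i j : I, K (δZ i) * E j = ang cd v βg ξg (δZ i) (δZ j) • (E j * K (δZ i)))
    (hJE : ∀ i j : I, Jp (δZ i) * E j = ξg j i • (E j * Jp (δZ i)))
    (bp : Module.Basis ((I →₀ ℤ) × FreeMonoid I × (I →₀ ℤ)) 𝔽 Ap)
    (hbp : ∀ p, bp p = K p.1 * wordProd E p.2.1 * Jp p.2.2)
    {Am : Type} [Ring Am] [Algebra 𝔽 Am]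
    (F : I → Am) (K' J' : (I →₀ ℤ) → Am)
    (hK'0 : K' 0 = 1) (hK'add : ∀ a b, K' (a + b) = K' a * K' b)
    (hJ'0 : J' 0 = 1) (hJ'add : ∀ a b, J' (a + b) = J' a * J' b)
    (hK'J' : ∀ a b, K' a * J' b = J' b * K' a)
    (hK'F : ∀ i j : I, K' (δZ i) * F j
      = (ang cd v βg ξg (δZ j) (δZ i) * (ξg i j)⁻¹) • (F j * K' (δZ i)))
    (hJ'F : ∀ i j : I, J' (δZ i) * F j = F j * J' (δZ i))
    (bm : Module.Basis ((I →₀ ℤ) × FreeMonoid I × (I →₀ ℤ)) 𝔽 Am)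
    (hbm : ∀ p, bm p = K' p.1 * wordProd F p.2.1 * J' p.2.2)
    (cK' cJ' : (I →₀ ℤ) → (Ap →ₗ[𝔽] Ap))
    (hcK' : ∀ (ν τ₁ τ₂ : I →₀ ℤ) (w : FreeMonoid I),
      cK' ν (K τ₁ * wordProd E w * Jp τ₂)
        = (ang cd v βg ξg τ₁ ν * ang cd v βg ξg (nz (wt w)) ν
            * (extZ ξg ν (nz (wt w)))⁻¹ * extZ ξg ν τ₂) • (K τ₁ * wordProd E w * Jp τ₂))
    (hcJ' : ∀ (ν τ₁ τ₂ : I →₀ ℤ) (w : FreeMonoid I),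
      cJ' ν (K τ₁ * wordProd E w * Jp τ₂) = K τ₁ * wordProd E w * Jp τ₂)
    (Sj : I → (Ap →ₗ[𝔽] Ap))
    (hSj0 : ∀ (j : I) (τ₁ τ₂ : I →₀ ℤ), Sj j (K τ₁ * Jp τ₂) = 0)
    (hSjE : ∀ j i : I, Sj j (E i) = if i = j then 1 else 0)
    (hSjmul : ∀ (j : I) (x y : Ap), Sj j (x * y) = Sj j x * y + cK' (δZ j) x * Sj j y)
    (G : (I →₀ ℕ) → 𝔽) (hG2 : ∀ i, G (δN i) ^ 2 = ξg i i)
    (hGadd : ∀ ν₁ ν₂, G (ν₁ + ν₂) = G ν₁ * G ν₂ * extZ ξg (nz ν₂) (nz ν₁))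
    (Δm : Am →ₐ[𝔽] (Am ⊗[𝔽] Am))
    (hΔmF : ∀ i, Δm (F i) = J' (δZ i) ⊗ₜ[𝔽] F i + F i ⊗ₜ[𝔽] K' (δZ i))
    (hΔmK' : ∀ ν, Δm (K' ν) = K' ν ⊗ₜ[𝔽] K' ν) (hΔmJ' : ∀ ν, Δm (J' ν) = J' ν ⊗ₜ[𝔽] J' ν)
    :
    (∃! ρm : Am →ₗ[𝔽] Module.End 𝔽 Ap,
      (∀ x y : Am, ρm (x * y) = ρm y * ρm x) ∧ ρm 1 = 1 ∧
      (∀ j : I, ρm (F j) = (G (δN j) * (v ^ (-(cd.d j)) - v ^ (cd.d j))⁻¹) • Sj j) ∧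
      (∀ i : I, ρm (K' (δZ i)) = cK' (δZ i)) ∧
      (∀ i : I, ρm (K' (-(δZ i))) = cK' (-(δZ i))) ∧
      (∀ i : I, ρm (J' (δZ i)) = cJ' (δZ i)) ∧
      (∀ i : I, ρm (J' (-(δZ i))) = cJ' (-(δZ i)))) ∧
    (∀ ρm : Am →ₗ[𝔽] Module.End 𝔽 Ap,
      ((∀ x y : Am, ρm (x * y) = ρm y * ρm x) ∧ ρm 1 = 1 ∧
       (∀ j : I, ρm (F j) = (G (δN j) * (v ^ (-(cd.d j)) - v ^ (cd.d j))⁻¹) • Sj j) ∧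
       (∀ i : I, ρm (K' (δZ i)) = cK' (δZ i)) ∧
       (∀ i : I, ρm (K' (-(δZ i))) = cK' (-(δZ i))) ∧
       (∀ i : I, ρm (J' (δZ i)) = cJ' (δZ i)) ∧
       (∀ i : I, ρm (J' (-(δZ i))) = cJ' (-(δZ i)))) →
      ∀ y ∈ Algebra.adjoin 𝔽 (Set.range F), ∀ x' x'', x' ∈ Algebra.adjoin 𝔽 (Set.range E) →
        x'' ∈ Algebra.adjoin 𝔽 (Set.range E) →
        ∀ (n : ℕ) (a b : Fin n → Am), Δm y = ∑ k, a k ⊗ₜ[𝔽] b k →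
        ρm y (x' * x'') = ∑ k, ρm (b k) x' * ρm (a k) x'') :=
  exists_unique_rho_minus_and_sweedler_general cd v hv βg ξg hββ hξne E K Jp hK0 hJ0 bp hbp F K' J'
    hK'0 hK'add hJ'0 hJ'add hK'J' hK'F hJ'F bm hbm cK' cJ' hcK' hcJ' Sj hSj0 hSjE hSjmul G Δm hΔmF
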